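/- Let Σ be an alphabet, 𝕄 = (M,+,val,𝟘) a timed valuation monoid, 𝓛 ⊆ 𝕋Σ⁺ a sequentially recognizable timed language and r : 𝕋Σ⁺ → M a sequentially recognizable quantitative timed language over 𝕄. Then the quantitative timed language r ∩ 𝓛 is sequentially recognizable over 𝕄. -/

import Mathlib

open scoped NNReal Classical

/-! # Core definitions: timed automata and weighted timed automata -/

/-- Comparison operators ⋈ ∈ {<, ≤, =, ≥, >}. -/
inductive Cmp : Type
  | lt | le | eq | ge | gt
  deriving DecidableEq

/-- Evaluation of a comparison `r ⋈ c` for `r ∈ ℝ≥0` and `c ∈ ℕ`. -/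
def Cmp.eval : Cmp → ℝ≥0 → ℕ → Prop
  | .lt, r, c => r < (c : ℝ≥0)
  | .le, r, c => r ≤ (c : ℝ≥0)
  | .eq, r, c => r = (c : ℝ≥0)
  | .ge, r, c => (c : ℝ≥0) ≤ r
  | .gt, r, c => (c : ℝ≥0) < r

/-- Clock constraints over a set `C` of clocks: `True` or conjunctions of `x ⋈ c`. -/
inductive ClockConstraint (C : Type) : Type
  | tt : ClockConstraint C
  | atom : C → Cmp → ℕ → ClockConstraint C
  | conj : ClockConstraint C → ClockConstraint C → ClockConstraint C

/-- A clock valuation assigns a non-negative real to each clock. -/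
def ClockVal (C : Type) : Type := C → ℝ≥0

/-- Satisfaction of clock constraints. -/
def ClockConstraint.Sat {C : Type} (ν : ClockVal C) : ClockConstraint C → Prop
  | .tt => True
  | .atom x op c => op.eval (ν x) c
  | .conj φ ψ => φ.Sat ν ∧ ψ.Sat ν

/-- `ν + t`: add `t` to every clock. -/
def ClockVal.add {C : Type} (ν : ClockVal C) (t : ℝ≥0) : ClockVal C := fun x => ν x + t

/-- `ν[Λ := 0]`: reset the clocks in `Λ` to `0`. -/
noncomputable def ClockVal.reset {C : Type} (ν : ClockVal C) (Λ : Set C) : ClockVal C :=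
  fun x => if x ∈ Λ then 0 else ν x

/-- The clock valuation assigning `0` to every clock. -/
def ClockVal.zero {C : Type} : ClockVal C := fun _ => 0

/-- An edge of a timed automaton: an element of `L × Σ × Φ(C) × 2^C × L`. -/
structure Edge (L A C : Type) : Type where
  src : L
  label : A
  guard : ClockConstraint C
  reset : Set C
  dst : L

/-- A timed automaton over the alphabet `A`. -/
structure TimedAutomaton (A : Type) : Type 1 where
  L : Type
  C : Type
  finL : Finite L
  finC : Finite C
  I : Set L
  F : Set L
  E : Set (Edge L A C)
  finE : E.Finite

/-- A (non-empty finite) timed word over `A`. -/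
abbrev TimedWord (A : Type) : Type := { w : List (A × ℝ≥0) // w ≠ [] }

/-- `T.IsRunFrom ℓ ν w es` holds iff `es` is the sequence of edges of a run of `T`
reading the timed word `w`, starting in location `ℓ` with clock valuation `ν`,
and ending in a final location. -/
def TimedAutomaton.IsRunFrom {A : Type} (T : TimedAutomaton A) :
    T.L → ClockVal T.C → List (A × ℝ≥0) → List (Edge T.L A T.C) → Prop
  | ℓ, _, [], [] => ℓ ∈ T.F
  | ℓ, ν, (a, t) :: w, e :: es =>
      e ∈ T.E ∧ e.src = ℓ ∧ e.label = a ∧ e.guard.Sat (ν.add t) ∧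
      T.IsRunFrom e.dst ((ν.add t).reset e.reset) w es
  | _, _, [], _ :: _ => False
  | _, _, _ :: _, [] => False

/-- `Run_T(w)`: the set of runs (identified with their edge sequences) of `T` on `w`. -/
def TimedAutomaton.RunOn {A : Type} (T : TimedAutomaton A) (w : TimedWord A) :
    Set (List (Edge T.L A T.C)) :=
  { es | ∃ ℓ₀ ∈ T.I, T.IsRunFrom ℓ₀ ClockVal.zero w.1 es }

/-- `L(T)`: the timed language accepted by `T`. -/
def TimedAutomaton.Lang {A : Type} (T : TimedAutomaton A) : Set (TimedWord A) :=
  { w | (T.RunOn w).Nonempty }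

/-- A timed automaton is unambiguous if every timed word has at most one run. -/
def TimedAutomaton.Unambiguous {A : Type} (T : TimedAutomaton A) : Prop :=
  ∀ w : TimedWord A, (T.RunOn w).Subsingleton

/-- A timed automaton is deterministic if it has a single initial location and the guards of
any two distinct edges with the same source and label are jointly unsatisfiable. -/
def TimedAutomaton.Deterministic {A : Type} (T : TimedAutomaton A) : Prop :=
  (∃ ℓ, T.I = {ℓ}) ∧
  ∀ e₁ ∈ T.E, ∀ e₂ ∈ T.E, e₁.src = e₂.src → e₁.label = e₂.label → e₁ ≠ e₂ →
    ∀ ν : ClockVal T.C, ¬ (e₁.guard.Sat ν ∧ e₂.guard.Sat ν)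

/-- A timed automaton is sequential if it has a single initial location and any two edges
with the same source and label are equal. -/
def TimedAutomaton.Sequential {A : Type} (T : TimedAutomaton A) : Prop :=
  (∃ ℓ, T.I = {ℓ}) ∧
  ∀ e₁ ∈ T.E, ∀ e₂ ∈ T.E, e₁.src = e₂.src → e₁.label = e₂.label → e₁ = e₂

/-- A timed language is recognizable by a timed automaton satisfying `P`. -/
def TLRecognizableBy {A : Type} (P : TimedAutomaton A → Prop) (𝓛 : Set (TimedWord A)) : Prop :=
  ∃ T : TimedAutomaton A, P T ∧ T.Lang = 𝓛

/-- A weighted timed automaton over the alphabet `A` and (the domain `M` of) a timed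
valuation monoid: a timed automaton together with weights on locations and edges.
The timed valuation monoid itself is given by an `AddCommMonoid M` instance together with a
timed valuation function `val : List ((M × M) × ℝ≥0) → M` (only its values on non-empty
lists, i.e. on `𝕋(M×M)⁺`, ever matter). -/
structure WTA (A M : Type) extends TimedAutomaton A where
  wtL : L → M
  wtE : Edge L A C → M

/-- The timed word `wt♯(ρ) ∈ 𝕋(M×M)⁺` associated with a run: the `i`-th letter is
`((wt(ℓ_{i-1}), wt(e_i)), t_i)`, where `ℓ_{i-1}` is the source location of edge `e_i`. -/
def WTA.runWord {A M : Type} (W : WTA A M) (w : List (A × ℝ≥0))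
    (es : List (Edge W.L A W.C)) : List ((M × M) × ℝ≥0) :=
  List.zipWith (fun (p : A × ℝ≥0) e => ((W.wtL e.src, W.wtE e), p.2)) w es

/-- The behavior `‖W‖ : 𝕋A⁺ → M` of a WTA: `‖W‖(w) = Σ (val(wt♯(ρ)) : ρ ∈ Run_W(w))`,
the empty sum being `0` (the monoid unit `𝟘`). -/
noncomputable def WTA.behavior {A M : Type} [AddCommMonoid M]
    (val : List ((M × M) × ℝ≥0) → M) (W : WTA A M) (w : TimedWord A) : M :=
  ∑ᶠ es ∈ W.toTimedAutomaton.RunOn w, val (W.runWord w.1 es)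

/-- A quantitative timed language `r : 𝕋A⁺ → M` is recognizable over the timed valuation
monoid `(M, +, val, 𝟘)` by a WTA whose underlying timed automaton satisfies `P`. -/
def QTLRecognizableBy {A M : Type} [AddCommMonoid M] (val : List ((M × M) × ℝ≥0) → M)
    (P : TimedAutomaton A → Prop) (r : TimedWord A → M) : Prop :=
  ∃ W : WTA A M, P W.toTimedAutomaton ∧ ∀ w, W.behavior val w = r w

/-- Recognizability (no restriction on the underlying timed automaton). -/
def QTLRecognizable {A M : Type} [AddCommMonoid M] (val : List ((M × M) × ℝ≥0) → M)
    (r : TimedWord A → M) : Prop :=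
  ∃ W : WTA A M, ∀ w, W.behavior val w = r w

/-- Renaming of timed words along `h : Γ → A`. -/
def mapTimedWord {Γ A : Type} (h : Γ → A) (v : TimedWord Γ) : TimedWord A :=
  ⟨v.1.map (fun p => (h p.1, p.2)), by
    cases v with
    | mk l hl => cases l with
      | nil => exact absurd rfl hl
      | cons p l => simp⟩

/-- `h(r)(w) = Σ (r(v) : v ∈ 𝕋Γ⁺, h(v) = w)` (a finite sum when `Γ` is finite). -/
noncomputable def pushQTL {Γ A M : Type} [AddCommMonoid M] (h : Γ → A)
    (r : TimedWord Γ → M) (w : TimedWord A) : M :=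
  ∑ᶠ v ∈ { v : TimedWord Γ | mapTimedWord h v = w }, r v

/-- `(val ∘ g)(w) = val((g(a₁),t₁)…(g(aₙ),tₙ))`. -/
def valComp {A M : Type} (val : List ((M × M) × ℝ≥0) → M) (g : A → M × M)
    (w : TimedWord A) : M :=
  val (w.1.map (fun p => (g p.1, p.2)))

/-- The intersection `r ∩ 𝓛` of a quantitative timed language with a timed language. -/
noncomputable def interQTL {A M : Type} [Zero M] (r : TimedWord A → M)
    (𝓛 : Set (TimedWord A)) (w : TimedWord A) : M :=
  if w ∈ 𝓛 then r w else 0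

/-- Membership in the Nivat class `N^P(A, 𝕄)`: `𝕃 = h((val ∘ g) ∩ 𝓛)` for some alphabet `Γ`,
maps `h : Γ → A`, `g : Γ → M × M` and a timed language `𝓛` recognizable by a timed
automaton satisfying `P`. -/
def NivatMem {A M : Type} [AddCommMonoid M] (val : List ((M × M) × ℝ≥0) → M)
    (P : ∀ {Γ : Type}, TimedAutomaton Γ → Prop) (𝕃 : TimedWord A → M) : Prop :=
  ∃ (Γ : Type) (_ : Finite Γ) (_ : Nonempty Γ) (h : Γ → A) (g : Γ → M × M)
    (𝓛 : Set (TimedWord Γ)),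
      TLRecognizableBy P 𝓛 ∧ ∀ w, 𝕃 w = pushQTL h (interQTL (valComp val g) 𝓛) w

/-- Membership in the class `H^P(A, 𝕄)`: `𝕃 = h(r)` for some alphabet `Γ`, `h : Γ → A`
and a quantitative timed language `r` recognizable by a WTA whose underlying timed
automaton satisfies `P`. -/
def HMem {A M : Type} [AddCommMonoid M] (val : List ((M × M) × ℝ≥0) → M)
    (P : ∀ {Γ : Type}, TimedAutomaton Γ → Prop) (𝕃 : TimedWord A → M) : Prop :=
  ∃ (Γ : Type) (_ : Finite Γ) (_ : Nonempty Γ) (h : Γ → A) (r : TimedWord Γ → M),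
      QTLRecognizableBy val (fun T => P T) r ∧ ∀ w, 𝕃 w = pushQTL h r w

/-- Idempotency of a timed valuation monoid. -/
def IsIdempotent (M : Type) [Add M] : Prop := ∀ m : M, m + m = m

/-- Location-independence of a timed valuation function: the value of `val` on a non-empty
timed word over `M × M` depends only on the second components and the time stamps. -/
def LocIndep {M : Type} (val : List ((M × M) × ℝ≥0) → M) : Prop :=
  ∀ l l' : List ((M × M) × ℝ≥0), l ≠ [] →
    l.map (fun p => (p.1.2, p.2)) = l'.map (fun p => (p.1.2, p.2)) → val l = val l'

/-!
Run the sequential automaton `T` for `𝓛` and the sequential WTA `W` for `r` in parallel, with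
disjoint clocks, and weight the product exactly as `W`. The product is again sequential. Runs of
the product on `w` are the pairs of runs of `T` and `W` on `w`; since `T` has at most one run, the
product has no run when `w ∉ 𝓛`, and otherwise its runs correspond bijectively to those of `W`,
with the same weights.
-/

namespace ClockConstraint

variable {C C' C₁ C₂ : Type}

def map (f : C → C') : ClockConstraint C → ClockConstraint C'
  | .tt => .tt
  | .atom x op c => .atom (f x) op c
  | .conj φ ψ => .conj (φ.map f) (ψ.map f)

theorem sat_map (f : C → C') (φ : ClockConstraint C) (ν : ClockVal C') :
    (φ.map f).Sat ν ↔ φ.Sat (fun x => ν (f x)) := by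
  induction φ with
  | tt => exact Iff.rfl
  | atom x op c => exact Iff.rfl
  | conj φ ψ ihφ ihψ => exact and_congr ihφ ihψ

/-- Left inverse of `map Sum.inr`: atoms on left clocks are replaced by `tt`. -/
def unmapInr : ClockConstraint (C₁ ⊕ C₂) → ClockConstraint C₂
  | .atom (.inr x) op c => .atom x op c
  | .conj φ ψ => .conj φ.unmapInr ψ.unmapInr
  | _ => .tt

theorem unmapInr_map_inr (φ : ClockConstraint C₂) : (φ.map Sum.inr).unmapInr (C₁ := C₁) = φ := by
  induction φ with
  | tt => rfl
  | atom x op c => rfl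
  | conj φ ψ ihφ ihψ => simp only [map, unmapInr, ihφ, ihψ]

end ClockConstraint

namespace Edge

variable {A L₁ L₂ C₁ C₂ : Type}

-- The label is taken from `e₂` so that `snd_prod` needs no hypothesis on labels.
def prod (e₁ : Edge L₁ A C₁) (e₂ : Edge L₂ A C₂) : Edge (L₁ × L₂) A (C₁ ⊕ C₂) where
  src := (e₁.src, e₂.src)
  label := e₂.label
  guard := .conj (e₁.guard.map Sum.inl) (e₂.guard.map Sum.inr)
  reset := Sum.inl '' e₁.reset ∪ Sum.inr '' e₂.reset
  dst := (e₁.dst, e₂.dst)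

-- The guard of `e₁.prod e₂` is `conj (e₁.guard.map inl) (e₂.guard.map inr)`, so `snd` reads
-- `e₂.guard` off the second conjunct.
def snd (e : Edge (L₁ × L₂) A (C₁ ⊕ C₂)) : Edge L₂ A C₂ where
  src := e.src.2
  label := e.label
  guard := match e.guard with
    | .conj _ ψ => ψ.unmapInr
    | φ => φ.unmapInr
  reset := Sum.inr ⁻¹' e.reset
  dst := e.dst.2

@[simp]
theorem snd_prod (e₁ : Edge L₁ A C₁) (e₂ : Edge L₂ A C₂) : (e₁.prod e₂).snd = e₂ := by
  simp [snd, prod, ClockConstraint.unmapInr_map_inr, Set.preimage_image_eq _ Sum.inr_injective]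

theorem guard_prod_sat {e₁ : Edge L₁ A C₁} {e₂ : Edge L₂ A C₂} {ν : ClockVal (C₁ ⊕ C₂)} :
    (e₁.prod e₂).guard.Sat ν ↔
      e₁.guard.Sat (fun x => ν (Sum.inl x)) ∧ e₂.guard.Sat (fun x => ν (Sum.inr x)) :=
  and_congr (ClockConstraint.sat_map _ _ _) (ClockConstraint.sat_map _ _ _)

theorem reset_prod_inl (e₁ : Edge L₁ A C₁) (e₂ : Edge L₂ A C₂) (ν : ClockVal (C₁ ⊕ C₂)) :
    (fun x => ν.reset (e₁.prod e₂).reset (Sum.inl x)) =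
      ClockVal.reset (fun x => ν (Sum.inl x)) e₁.reset := by
  funext x; simp [ClockVal.reset, prod]

theorem reset_prod_inr (e₁ : Edge L₁ A C₁) (e₂ : Edge L₂ A C₂) (ν : ClockVal (C₁ ⊕ C₂)) :
    (fun x => ν.reset (e₁.prod e₂).reset (Sum.inr x)) =
      ClockVal.reset (fun x => ν (Sum.inr x)) e₂.reset := by
  funext x; simp [ClockVal.reset, prod]

theorem map_snd_zipWith_prod {es₁ : List (Edge L₁ A C₁)} {es₂ : List (Edge L₂ A C₂)}
    (h : es₁.length = es₂.length) : (List.zipWith prod es₁ es₂).map snd = es₂ := by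
  induction es₁ generalizing es₂ with
  | nil => cases es₂ <;> simp_all
  | cons e₁ es₁ ih => cases es₂ <;> simp_all

end Edge

namespace TimedAutomaton

variable {A M : Type}

theorem IsRunFrom.length_eq {T : TimedAutomaton A} :
    ∀ {ℓ ν w es}, T.IsRunFrom ℓ ν w es → es.length = w.length
  | _, _, [], [], _ => rfl
  | _, _, _ :: _, _ :: _, ⟨_, _, _, _, h⟩ => congrArg (· + 1) h.length_eq

theorem Sequential.isRunFrom_unique {T : TimedAutomaton A} (hT : T.Sequential) :
    ∀ {ℓ ν w es es'}, T.IsRunFrom ℓ ν w es → T.IsRunFrom ℓ ν w es' → es = es'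
  | _, _, [], [], [], _, _ => rfl
  | _, _, _ :: _, e :: _, e' :: _, ⟨he, hsrc, hlab, _, h⟩, ⟨he', hsrc', hlab', _, h'⟩ => by
    obtain rfl : e = e' := hT.2 e he e' he' (hsrc.trans hsrc'.symm) (hlab.trans hlab'.symm)
    rw [hT.isRunFrom_unique h h']

theorem Sequential.unambiguous {T : TimedAutomaton A} (hT : T.Sequential) : T.Unambiguous := by
  rintro w es ⟨ℓ, hℓ, h⟩ es' ⟨ℓ', hℓ', h'⟩
  obtain ⟨ℓ₀, hI⟩ := hT.1
  rw [hI] at hℓ hℓ'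
  subst hℓ hℓ'
  exact hT.isRunFrom_unique h h'

-- Reducible, so that `(T.prod U).L` and `(T.prod U).C` unfold to `T.L × U.L` and `T.C ⊕ U.C`.
abbrev prod (T U : TimedAutomaton A) : TimedAutomaton A where
  L := T.L × U.L
  C := T.C ⊕ U.C
  finL := have := T.finL; have := U.finL; inferInstance
  finC := have := T.finC; have := U.finC; inferInstance
  I := T.I ×ˢ U.I
  F := T.F ×ˢ U.F
  E := { e | ∃ e₁ ∈ T.E, ∃ e₂ ∈ U.E, e₁.label = e₂.label ∧ e₁.prod e₂ = e }
  finE := (T.finE.image2 Edge.prod U.finE).subset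
    fun _ ⟨e₁, h₁, e₂, h₂, _, he⟩ => ⟨e₁, h₁, e₂, h₂, he⟩

theorem Sequential.prod {T U : TimedAutomaton A} (hT : T.Sequential) (hU : U.Sequential) :
    (T.prod U).Sequential := by
  obtain ⟨ℓ, hℓ⟩ := hT.1
  obtain ⟨ℓ', hℓ'⟩ := hU.1
  refine ⟨⟨(ℓ, ℓ'), (congrArg₂ (· ×ˢ ·) hℓ hℓ').trans Set.singleton_prod_singleton⟩, ?_⟩
  rintro _ ⟨e₁, h₁, e₂, h₂, hlab, rfl⟩ _ ⟨e₁', h₁', e₂', h₂', hlab', rfl⟩ hsrc hlab''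
  obtain ⟨hsrc₁, hsrc₂⟩ := Prod.mk.inj hsrc
  obtain rfl := hU.2 e₂ h₂ e₂' h₂' hsrc₂ hlab''
  obtain rfl := hT.2 e₁ h₁ e₁' h₁' hsrc₁ (hlab.trans (hlab''.trans hlab'.symm))
  rfl

theorem IsRunFrom.prod {T U : TimedAutomaton A} :
    ∀ {w ℓ₁ ℓ₂ ν es₁ es₂}, T.IsRunFrom ℓ₁ (fun x => ν (Sum.inl x)) w es₁ →
      U.IsRunFrom ℓ₂ (fun x => ν (Sum.inr x)) w es₂ →
      (T.prod U).IsRunFrom (ℓ₁, ℓ₂) ν w (List.zipWith Edge.prod es₁ es₂)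
  | [], _, _, _, [], [], h₁, h₂ => ⟨h₁, h₂⟩
  | _ :: _, _, _, ν, e₁ :: _, e₂ :: _, ⟨he₁, hsrc₁, hlab₁, hg₁, h₁⟩, ⟨he₂, hsrc₂, hlab₂, hg₂, h₂⟩ =>
    ⟨⟨e₁, he₁, e₂, he₂, hlab₁.trans hlab₂.symm, rfl⟩, by rw [← hsrc₁, ← hsrc₂]; rfl, hlab₂,
      Edge.guard_prod_sat.2 ⟨hg₁, hg₂⟩,
      IsRunFrom.prod (by rwa [Edge.reset_prod_inl]) (by rwa [Edge.reset_prod_inr])⟩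

theorem IsRunFrom.exists_of_prod {T U : TimedAutomaton A} :
    ∀ {w ℓ ν es}, (T.prod U).IsRunFrom ℓ ν w es →
      ∃ es₁ es₂, T.IsRunFrom ℓ.1 (fun x => ν (Sum.inl x)) w es₁ ∧
        U.IsRunFrom ℓ.2 (fun x => ν (Sum.inr x)) w es₂ ∧ List.zipWith Edge.prod es₁ es₂ = es
  | [], _, _, [], ⟨h₁, h₂⟩ => ⟨[], [], h₁, h₂, rfl⟩
  | _ :: _, _, _, _ :: _, ⟨⟨e₁, he₁, e₂, he₂, hlab, rfl⟩, rfl, hlab₂, hg, h⟩ => by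
    obtain ⟨hg₁, hg₂⟩ := Edge.guard_prod_sat.1 hg
    obtain ⟨es₁, es₂, h₁, h₂, rfl⟩ := h.exists_of_prod
    rw [Edge.reset_prod_inl] at h₁
    rw [Edge.reset_prod_inr] at h₂
    exact ⟨e₁ :: es₁, e₂ :: es₂, ⟨he₁, rfl, hlab.trans hlab₂, hg₁, h₁⟩,
      ⟨he₂, rfl, hlab₂, hg₂, h₂⟩, rfl⟩

theorem runOn_prod (T U : TimedAutomaton A) (w : TimedWord A) :
    (T.prod U).RunOn w = Set.image2 (List.zipWith Edge.prod) (T.RunOn w) (U.RunOn w) := by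
  ext es
  constructor
  · rintro ⟨ℓ, ⟨hℓ₁, hℓ₂⟩, h⟩
    obtain ⟨es₁, es₂, h₁, h₂, rfl⟩ := h.exists_of_prod
    exact ⟨es₁, ⟨ℓ.1, hℓ₁, h₁⟩, es₂, ⟨ℓ.2, hℓ₂, h₂⟩, rfl⟩
  · rintro ⟨es₁, ⟨ℓ₁, hℓ₁, h₁⟩, es₂, ⟨ℓ₂, hℓ₂, h₂⟩, rfl⟩
    exact ⟨(ℓ₁, ℓ₂), ⟨hℓ₁, hℓ₂⟩, h₁.prod h₂⟩


theorem length_eq_of_mem_runOn {T : TimedAutomaton A} {w : TimedWord A} {es}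
    (h : es ∈ T.RunOn w) : es.length = w.1.length :=
  let ⟨_, _, h⟩ := h; h.length_eq

abbrev prodWTA (T : TimedAutomaton A) (W : WTA A M) : WTA A M where
  toTimedAutomaton := T.prod W.toTimedAutomaton
  wtL ℓ := W.wtL ℓ.2
  wtE e := W.wtE e.snd

theorem runWord_prodWTA (T : TimedAutomaton A) (W : WTA A M) (w : List (A × ℝ≥0))
    (es : List (Edge (T.L × W.L) A (T.C ⊕ W.C))) :
    (T.prodWTA W).runWord w es = W.runWord w (es.map Edge.snd) := by
  simp only [WTA.runWord, List.zipWith_map_right]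
  rfl

theorem behavior_prodWTA [AddCommMonoid M] (val : List ((M × M) × ℝ≥0) → M)
    {T : TimedAutomaton A} (hT : T.Unambiguous) (W : WTA A M) (w : TimedWord A) :
    (T.prodWTA W).behavior val w = interQTL (W.behavior val) T.Lang w := by
  unfold WTA.behavior interQTL
  rw [runOn_prod]
  rcases (hT w).eq_empty_or_singleton with hrun | ⟨es₁, hrun⟩
  · have hw : w ∉ T.Lang := by simp [Lang, hrun]
    simp [hrun, hw]
  have hw : w ∈ T.Lang := by simp [Lang, hrun]
  have hes₁ : es₁ ∈ T.RunOn w := hrun ▸ rfl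
  have hsnd : Set.LeftInvOn (List.map Edge.snd) (List.zipWith Edge.prod es₁) (W.RunOn w) :=
    fun es₂ hes₂ => Edge.map_snd_zipWith_prod
      ((length_eq_of_mem_runOn hes₁).trans (length_eq_of_mem_runOn hes₂).symm)
  rw [if_pos hw, hrun, Set.image2_singleton_left, finsum_mem_image hsnd.injOn]
  refine finsum_mem_congr rfl fun es₂ hes₂ => ?_
  rw [runWord_prodWTA, hsnd hes₂]

end TimedAutomaton

theorem interQTL_sequentially_recognizable_general {S M : Type}
    [AddCommMonoid M] (val : List ((M × M) × ℝ≥0) → M)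
    (𝓛 : Set (TimedWord S)) (h𝓛 : TLRecognizableBy TimedAutomaton.Sequential 𝓛)
    (r : TimedWord S → M)
    (hr : QTLRecognizableBy val TimedAutomaton.Sequential r) :
    QTLRecognizableBy val TimedAutomaton.Sequential (interQTL r 𝓛) := by
  obtain ⟨T, hT, rfl⟩ := h𝓛
  obtain ⟨W, hW, hWr⟩ := hr
  refine ⟨T.prodWTA W, hT.prod hW, fun w => ?_⟩
  rw [TimedAutomaton.behavior_prodWTA val hT.unambiguous, interQTL, interQTL, hWr]

/-- If `𝓛 ⊆ 𝕋Σ⁺` is a sequentially recognizable timed language and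
`r : 𝕋Σ⁺ → M` is a sequentially recognizable quantitative timed language over a timed
valuation monoid `𝕄`, then `r ∩ 𝓛` is sequentially recognizable over `𝕄`. -/
theorem interQTL_sequentially_recognizable {S M : Type} [Finite S] [Nonempty S]
    [AddCommMonoid M] (val : List ((M × M) × ℝ≥0) → M)
    (𝓛 : Set (TimedWord S)) (h𝓛 : TLRecognizableBy TimedAutomaton.Sequential 𝓛)
    (r : TimedWord S → M)
    (hr : QTLRecognizableBy val TimedAutomaton.Sequential r) :
    QTLRecognizableBy val TimedAutomaton.Sequential (interQTL r 𝓛) :=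
  interQTL_sequentially_recognizable_general val 𝓛 h𝓛 r hr
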